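/- Fix q with 1 < q < 2 and let Ω ⊂ ℝ^d be a measurable set of finite Lebesgue measure. Let σ, τ ∈ L^q(Ω; ℝ^d) be such that the function x ↦ |σ(x)|^{q-2}σ(x)·(τ(x) - σ(x)) is integrable and satisfies the Euler–Lagrange orthogonality ∫_Ω |σ|^{q-2}σ·(τ - σ) dx = 0 (with the integrand interpreted as 0 where σ = 0). Then there exist constants 0 < c ≤ C < ∞ depending solely on q such that c ∫_Ω |V*(τ) - V*(σ)|² dx ≤ J*(τ) - J*(σ) ≤ C ∫_Ω |V*(τ) - V*(σ)|² dx, where V*(P) = |P|^{(q-2)/2} P for P ≠ 0 and V*(0) = 0, and J*(τ) = (1/q)∫_Ω |τ|^q dx. -/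
import Mathlib


open Real MeasureTheory
open scoped RealInnerProductSpace

/-- The dual energy `J*(τ) = (1/q) ∫_Ω |τ|^q dx`. -/
noncomputable def Jstar (q : ℝ) {d : ℕ} (Ω : Set (EuclideanSpace ℝ (Fin d)))
    (τ : EuclideanSpace ℝ (Fin d) → EuclideanSpace ℝ (Fin d)) : ℝ :=
  (1/q) * ∫ x in Ω, ‖τ x‖ ^ q

/-- `V*(P) = |P|^((q-2)/2) P`, with `V*(0) = 0` (automatic for `rpow` and `•`). -/
noncomputable def VstarU (q : ℝ) {d : ℕ} (P : EuclideanSpace ℝ (Fin d)) :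
    EuclideanSpace ℝ (Fin d) :=
  (‖P‖ ^ ((q-2)/2)) • P

set_option maxHeartbeats 1000000

lemma sq_rpow'' {x : ℝ} (hx : 0 ≤ x) (p : ℝ) : (x ^ p) ^ (2:ℕ) = x ^ (p * 2) := by
  rw [← Real.rpow_natCast (x ^ p) 2, ← Real.rpow_mul hx]
  norm_num

lemma F1 {β a b : ℝ} (hβ0 : 0 < β) (hβ1 : β < 1) (ha : 0 ≤ a) (hb : 0 ≤ b) :
    a ^ β * b ^ (2 - β) ≤ (1 - β) * b ^ (2:ℕ) + β * (a * b) := by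
  have h := Real.geom_mean_le_arith_mean2_weighted (w₁ := β) (w₂ := 1 - β)
    (p₁ := a * b) (p₂ := b ^ (2:ℕ)) hβ0.le (by linarith) (mul_nonneg ha hb) (by positivity)
    (by ring)
  calc a ^ β * b ^ (2 - β) = (a*b) ^ β * (b ^ (2:ℕ)) ^ (1-β) := by
        rw [Real.mul_rpow ha hb, ← Real.rpow_natCast b 2, ← Real.rpow_mul hb,
          mul_assoc, ← Real.rpow_add' hb (by intro hc; nlinarith)]
        push_cast
        rw [show β + 2 * (1-β) = 2 - β by ring]
    _ ≤ β * (a*b) + (1-β) * b ^ (2:ℕ) := h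
    _ = (1 - β) * b ^ (2:ℕ) + β * (a * b) := by ring

lemma F2 {β a b : ℝ} (hβ0 : 0 < β) (hβ1 : β < 1) (ha : 0 ≤ a) (hb : 0 ≤ b) :
    a ^ β * b ^ (2 - β) ≤ (β/2) * a ^ (2:ℕ) + (1 - β/2) * b ^ (2:ℕ) := by
  have h := Real.geom_mean_le_arith_mean2_weighted (w₁ := β/2) (w₂ := 1 - β/2)
    (p₁ := a ^ (2:ℕ)) (p₂ := b ^ (2:ℕ)) (by linarith) (by linarith) (by positivity)
    (by positivity) (by ring)
  calc a ^ β * b ^ (2 - β) = (a ^ (2:ℕ)) ^ (β/2) * (b ^ (2:ℕ)) ^ (1-β/2) := by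
        rw [← Real.rpow_natCast a 2, ← Real.rpow_natCast b 2, ← Real.rpow_mul ha,
          ← Real.rpow_mul hb]
        push_cast
        rw [show (2:ℝ) * (β/2) = β by ring, show (2:ℝ) * (1-β/2) = 2-β by ring]
    _ ≤ (β/2) * a ^ (2:ℕ) + (1 - β/2) * b ^ (2:ℕ) := h

lemma F4 {β a b : ℝ} (hβ0 : 0 < β) (hβ1 : β < 1) (ha : 0 ≤ a) (hb : 0 ≤ b) :
    (1+β) * (a * b ^ (2:ℕ)) ≤ a * (a ^ β * b ^ (2 - β)) + β * b ^ (3:ℕ) := by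
  have h1β : (0:ℝ) < 1 + β := by linarith
  have h := Real.geom_mean_le_arith_mean2_weighted (w₁ := 1/(1+β)) (w₂ := β/(1+β))
    (p₁ := a * (a ^ β * b ^ (2-β))) (p₂ := b ^ (3:ℕ)) (by positivity)
    (by positivity) (by positivity) (by positivity) (by field_simp)
  have key : (a * (a ^ β * b ^ (2-β))) ^ (1/(1+β)) * (b ^ (3:ℕ)) ^ (β/(1+β))
      = a * b ^ (2:ℕ) := by
    have ha1 : a * a ^ β = a ^ (1 + β) := by
      rw [Real.rpow_add' ha (by positivity), Real.rpow_one]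
    have hexp : (2-β) * (1/(1+β)) + ((3:ℕ):ℝ) * (β/(1+β)) = 2 := by
      push_cast; field_simp; ring
    rw [← mul_assoc, ha1, Real.mul_rpow (by positivity) (by positivity),
      ← Real.rpow_natCast b 3, ← Real.rpow_mul hb, ← Real.rpow_mul ha,
      ← Real.rpow_mul hb, mul_assoc, ← Real.rpow_add' hb (by rw [hexp]; norm_num),
      hexp, show (1+β) * (1/(1+β)) = 1 by field_simp, Real.rpow_one]
    rw [show (2:ℝ) = ((2:ℕ):ℝ) by norm_num, Real.rpow_natCast]
  rw [key, show 1/(1+β) * (a * (a ^ β * b ^ (2-β))) + β/(1+β) * b ^ (3:ℕ)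
      = (a * (a ^ β * b ^ (2-β)) + β * b ^ (3:ℕ))/(1+β) by field_simp,
    le_div_iff₀ h1β] at h
  linarith [h]

lemma F5 {β a b : ℝ} (hβ0 : 0 < β) (hβ1 : β < 1) (ha : 0 ≤ a) (hb : 0 ≤ b)
    (hab : a ≤ b) : a * b ≤ a ^ β * b ^ (2 - β) := by
  have h1 : b ^ (2-β) = b ^ (1-β) * b := by
    rw [show (2-β) = (1-β) + 1 by ring,
      Real.rpow_add' hb (ne_of_gt (by linarith)), Real.rpow_one]
  have h2 : a ^ β * a ^ (1-β) = a := by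
    rw [← Real.rpow_add' ha (by norm_num)]; norm_num
  have h3 : a ^ (1-β) ≤ b ^ (1-β) := Real.rpow_le_rpow ha hab (by linarith)
  calc a * b = a ^ β * a ^ (1-β) * b := by rw [h2]
    _ ≤ a ^ β * b ^ (1-β) * b :=
        mul_le_mul_of_nonneg_right
          (mul_le_mul_of_nonneg_left h3 (Real.rpow_nonneg ha β)) hb
    _ = a ^ β * b ^ (2-β) := by rw [h1]; ring

lemma core_plus_lower {β a b : ℝ} (hβ0 : 0 < β) (hβ1 : β < 1) (ha : 0 ≤ a) (hb : 0 ≤ b) :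
    (β/2) * (b-a) ^ (2:ℕ) ≤ (1-β/2) * b ^ (2:ℕ) + (β/2) * a ^ (2:ℕ) - a ^ β * b ^ (2-β) := by
  nlinarith [F1 hβ0 hβ1 ha hb]

lemma core_plus_upper {β a b : ℝ} (hβ0 : 0 < β) (hβ1 : β < 1) (ha : 0 ≤ a) (hb : 0 ≤ b) :
    (1-β/2) * b ^ (2:ℕ) + (β/2) * a ^ (2:ℕ) - a ^ β * b ^ (2-β) ≤ (3/2) * (b-a) ^ (2:ℕ) := by
  rcases le_or_gt a (β*b) with hc | hc
  · have hab : a ≤ b := le_trans hc (by nlinarith)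
    have h5 := F5 hβ0 hβ1 ha hb hab
    nlinarith [mul_nonneg (sub_nonneg.2 hc) (sub_nonneg.2 hab), sq_nonneg (b-a)]
  · have ha' : 0 < a := lt_of_le_of_lt (by positivity) hc
    have h4 := F4 hβ0 hβ1 ha hb
    nlinarith [mul_nonneg (sub_nonneg.2 hc.le) (sq_nonneg (a-b)),
      mul_nonneg ha (sq_nonneg (a-b)), mul_pos ha' ha']

lemma core_minus_lower {β a b : ℝ} (hβ0 : 0 < β) (hβ1 : β < 1) (ha : 0 ≤ a) (hb : 0 ≤ b) :
    (β/4) * (b+a) ^ (2:ℕ) ≤ (1-β/2) * b ^ (2:ℕ) + (β/2) * a ^ (2:ℕ) + a ^ β * b ^ (2-β) := by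
  have hP : (0:ℝ) ≤ a ^ β * b ^ (2-β) := by positivity
  nlinarith [sq_nonneg (a-b), sq_nonneg a, sq_nonneg b]

lemma core_minus_upper {β a b : ℝ} (hβ0 : 0 < β) (hβ1 : β < 1) (ha : 0 ≤ a) (hb : 0 ≤ b) :
    (1-β/2) * b ^ (2:ℕ) + (β/2) * a ^ (2:ℕ) + a ^ β * b ^ (2-β) ≤ 2 * (b+a) ^ (2:ℕ) := by
  nlinarith [F2 hβ0 hβ1 ha hb, mul_nonneg ha hb, sq_nonneg a, sq_nonneg b]

lemma scalar_main {β A B kk mm st u : ℝ} (hβ0 : 0 < β) (hβ1 : β < 1)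
    (hA : 0 ≤ A) (hB : 0 ≤ B) (hst : 0 ≤ st)
    (hu1 : -st ≤ u) (hu2 : u ≤ st)
    (hk : kk * st = A ^ β * B ^ (2-β)) (hm : mm * st = A * B) :
    (β/4) * (B^(2:ℕ) + A^(2:ℕ) - 2*(mm*u)) ≤ (1-β/2)*B^(2:ℕ) + (β/2)*A^(2:ℕ) - kk*u ∧
    (1-β/2)*B^(2:ℕ) + (β/2)*A^(2:ℕ) - kk*u ≤ 2 * (B^(2:ℕ) + A^(2:ℕ) - 2*(mm*u)) := by
  have e1 := core_plus_lower hβ0 hβ1 hA hB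
  have e2 := core_minus_lower hβ0 hβ1 hA hB
  have e3 := core_plus_upper hβ0 hβ1 hA hB
  have e4 := core_minus_upper hβ0 hβ1 hA hB
  set P := A ^ β * B ^ (2-β) with hP
  rcases eq_or_lt_of_le hst with hst0 | hst0
  · -- st = 0, hence u = 0, P = 0, A*B = 0
    have hu0 : u = 0 := by nlinarith
    have hP0 : P = 0 := by rw [← hk, ← hst0]; ring
    have hAB : A * B = 0 := by rw [← hm, ← hst0]; ring
    subst hu0
    constructor <;> nlinarith [e1, e2, e3, e4]
  · -- st > 0
    have s1 : 0 ≤ (1-β/2)*B^(2:ℕ) + (β/2)*A^(2:ℕ) - P - (β/4)*(B^(2:ℕ)+A^(2:ℕ)) + (β/2)*(A*B) := by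
      nlinarith [e1]
    have s2 : 0 ≤ (1-β/2)*B^(2:ℕ) + (β/2)*A^(2:ℕ) + P - (β/4)*(B^(2:ℕ)+A^(2:ℕ)) - (β/2)*(A*B) := by
      nlinarith [e2]
    have t1 : 0 ≤ 2*(B^(2:ℕ)+A^(2:ℕ)) - 4*(A*B) - ((1-β/2)*B^(2:ℕ) + (β/2)*A^(2:ℕ) - P) := by
      nlinarith [e3, sq_nonneg (B-A)]
    have t2 : 0 ≤ 2*(B^(2:ℕ)+A^(2:ℕ)) + 4*(A*B) - ((1-β/2)*B^(2:ℕ) + (β/2)*A^(2:ℕ) + P) := by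
      nlinarith [e4]
    constructor
    · have key : ((1-β/2)*B^(2:ℕ) + (β/2)*A^(2:ℕ) - kk*u
          - (β/4)*(B^(2:ℕ) + A^(2:ℕ) - 2*(mm*u))) * (2*st)
          = ((1-β/2)*B^(2:ℕ) + (β/2)*A^(2:ℕ) - P - (β/4)*(B^(2:ℕ)+A^(2:ℕ)) + (β/2)*(A*B)) * (st+u)
          + ((1-β/2)*B^(2:ℕ) + (β/2)*A^(2:ℕ) + P - (β/4)*(B^(2:ℕ)+A^(2:ℕ)) - (β/2)*(A*B)) * (st-u) := by
        linear_combination (-2*u) * hk + (β*u) * hm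
      nlinarith [key, mul_nonneg s1 (by linarith : (0:ℝ) ≤ st + u),
        mul_nonneg s2 (by linarith : (0:ℝ) ≤ st - u), hst0]
    · have key : (2 * (B^(2:ℕ) + A^(2:ℕ) - 2*(mm*u))
          - ((1-β/2)*B^(2:ℕ) + (β/2)*A^(2:ℕ) - kk*u)) * (2*st)
          = (2*(B^(2:ℕ)+A^(2:ℕ)) - 4*(A*B) - ((1-β/2)*B^(2:ℕ) + (β/2)*A^(2:ℕ) - P)) * (st+u)
          + (2*(B^(2:ℕ)+A^(2:ℕ)) + 4*(A*B) - ((1-β/2)*B^(2:ℕ) + (β/2)*A^(2:ℕ) + P)) * (st-u) := by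
        linear_combination (2*u) * hk + (-8*u) * hm
      nlinarith [key, mul_nonneg t1 (by linarith : (0:ℝ) ≤ st + u),
        mul_nonneg t2 (by linarith : (0:ℝ) ≤ st - u), hst0]

lemma pointwise (q : ℝ) (hq1 : 1 < q) (hq2 : q < 2) {d : ℕ}
    (a b : EuclideanSpace ℝ (Fin d)) :
    (q-1)/(2*q) * ‖VstarU q b - VstarU q a‖^(2:ℕ) ≤
      (1/q)*‖b‖^q - (1/q)*‖a‖^q - ‖a‖^(q-2) * ⟪a, b - a⟫ ∧
    (1/q)*‖b‖^q - (1/q)*‖a‖^q - ‖a‖^(q-2) * ⟪a, b - a⟫ ≤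
      2 * ‖VstarU q b - VstarU q a‖^(2:ℕ) := by
  have hq0 : (0:ℝ) < q := by linarith
  have hs : 0 ≤ ‖a‖ := norm_nonneg a
  have ht : 0 ≤ ‖b‖ := norm_nonneg b
  have habs := abs_real_inner_le_norm a b
  have hu1 : -(‖a‖*‖b‖) ≤ ⟪a, b⟫ := (abs_le.1 habs).1
  have hu2 : ⟪a, b⟫ ≤ ‖a‖*‖b‖ := (abs_le.1 habs).2
  have hβ0 : 0 < 2*(q-1)/q := div_pos (by linarith) hq0
  have hβ1 : 2*(q-1)/q < 1 := by rw [div_lt_one hq0]; linarith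
  have hhalf : ∀ x : ℝ, 0 ≤ x → x ^ ((q-2)/2) * x = x ^ (q/2) := by
    intro x hx
    calc x ^ ((q-2)/2) * x = x ^ ((q-2)/2) * x ^ (1:ℝ) := by rw [Real.rpow_one]
      _ = x ^ ((q-2)/2 + 1) := (Real.rpow_add' hx (ne_of_gt (by linarith))).symm
      _ = x ^ (q/2) := by rw [show (q-2)/2 + 1 = q/2 by ring]
  have hA : 0 ≤ ‖a‖ ^ (q/2) := Real.rpow_nonneg hs _
  have hB : 0 ≤ ‖b‖ ^ (q/2) := Real.rpow_nonneg ht _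
  have hA2 : (‖a‖ ^ (q/2)) ^ (2:ℕ) = ‖a‖ ^ q := by
    rw [sq_rpow'' hs, show q/2*2 = q by ring]
  have hB2 : (‖b‖ ^ (q/2)) ^ (2:ℕ) = ‖b‖ ^ q := by
    rw [sq_rpow'' ht, show q/2*2 = q by ring]
  have hk : (‖a‖ ^ (q-2)) * (‖a‖*‖b‖)
      = (‖a‖ ^ (q/2)) ^ (2*(q-1)/q) * (‖b‖ ^ (q/2)) ^ (2-2*(q-1)/q) := by
    have h1 : (‖a‖ ^ (q/2)) ^ (2*(q-1)/q) = ‖a‖ ^ (q-1) := by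
      rw [← Real.rpow_mul hs, show q/2*(2*(q-1)/q) = q-1 by field_simp]
    have h2 : (‖b‖ ^ (q/2)) ^ (2-2*(q-1)/q) = ‖b‖ := by
      rw [← Real.rpow_mul ht, show q/2*(2-2*(q-1)/q) = 1 by field_simp; ring,
        Real.rpow_one]
    have h3 : ‖a‖ ^ (q-2) * ‖a‖ = ‖a‖ ^ (q-1) := by
      calc ‖a‖ ^ (q-2) * ‖a‖ = ‖a‖ ^ (q-2) * ‖a‖ ^ (1:ℝ) := by rw [Real.rpow_one]
        _ = ‖a‖ ^ ((q-2) + 1) := (Real.rpow_add' hs (ne_of_gt (by linarith))).symm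
        _ = ‖a‖ ^ (q-1) := by rw [show (q-2) + 1 = q-1 by ring]
    rw [h1, h2, ← h3]; ring
  have hm : (‖a‖ ^ ((q-2)/2) * ‖b‖ ^ ((q-2)/2)) * (‖a‖*‖b‖)
      = ‖a‖ ^ (q/2) * ‖b‖ ^ (q/2) := by
    rw [← hhalf _ hs, ← hhalf _ ht]; ring
  have hinner : ⟪a, b - a⟫ = ⟪a, b⟫ - ‖a‖ ^ (2:ℕ) := by
    rw [inner_sub_right, real_inner_self_eq_norm_sq]
  have hkk2 : ‖a‖ ^ (q-2) * ‖a‖ ^ (2:ℕ) = ‖a‖ ^ q := by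
    rw [← Real.rpow_natCast ‖a‖ 2, ← Real.rpow_add' hs (by norm_num; linarith)]
    norm_num
  have e1 : ‖VstarU q b‖^(2:ℕ) = (‖b‖ ^ (q/2))^(2:ℕ) := by
    rw [show VstarU q b = (‖b‖ ^ ((q-2)/2)) • b from rfl, norm_smul, Real.norm_eq_abs,
      abs_of_nonneg (Real.rpow_nonneg ht _), ← hhalf _ ht]
  have e2 : ‖VstarU q a‖^(2:ℕ) = (‖a‖ ^ (q/2))^(2:ℕ) := by
    rw [show VstarU q a = (‖a‖ ^ ((q-2)/2)) • a from rfl, norm_smul, Real.norm_eq_abs,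
      abs_of_nonneg (Real.rpow_nonneg hs _), ← hhalf _ hs]
  have e3 : ⟪VstarU q b, VstarU q a⟫
      = (‖a‖ ^ ((q-2)/2) * ‖b‖ ^ ((q-2)/2)) * ⟪a, b⟫ := by
    rw [show VstarU q b = (‖b‖ ^ ((q-2)/2)) • b from rfl,
      show VstarU q a = (‖a‖ ^ ((q-2)/2)) • a from rfl,
      real_inner_smul_left, real_inner_smul_right, real_inner_comm b a]
    ring
  have hVnorm : ‖VstarU q b - VstarU q a‖^(2:ℕ)
      = (‖b‖ ^ (q/2))^(2:ℕ) + (‖a‖ ^ (q/2))^(2:ℕ)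
        - 2*((‖a‖ ^ ((q-2)/2) * ‖b‖ ^ ((q-2)/2)) * ⟪a, b⟫) := by
    rw [norm_sub_sq_real, e1, e2, e3]; ring
  have hq_inv : (1:ℝ)/q = 1 - (2*(q-1)/q)/2 := by field_simp; ring
  have hcβ : (q-1)/(2*q) = (2*(q-1)/q)/4 := by ring
  have hexp : (1/q)*‖b‖^q - (1/q)*‖a‖^q - ‖a‖^(q-2) * ⟪a, b - a⟫
      = (1-(2*(q-1)/q)/2)*(‖b‖ ^ (q/2))^(2:ℕ) + ((2*(q-1)/q)/2)*(‖a‖ ^ (q/2))^(2:ℕ)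
        - (‖a‖ ^ (q-2)) * ⟪a, b⟫ := by
    rw [hinner]
    linear_combination ((‖b‖ ^ (q/2))^(2:ℕ)-(‖a‖ ^ (q/2))^(2:ℕ)) * hq_inv + hkk2
      - hA2 - (1/q)*hB2 + (1/q)*hA2
  have hmain := scalar_main hβ0 hβ1 hA hB (mul_nonneg hs ht) hu1 hu2 hk hm
  rw [hcβ, hVnorm, hexp]
  exact hmain

/-- natural distance for the unrelaxed dual energy. For `1 < q < 2`
there are constants `0 < c ≤ C < ∞` depending solely on `q` such that: whenever
`Ω ⊂ ℝ^d` is measurable of finite measure, `σ, τ ∈ L^q(Ω;ℝ^d)`, the function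
`x ↦ |σ(x)|^(q-2) σ(x)·(τ(x)-σ(x))` is integrable and has integral `0` (Euler–Lagrange
orthogonality), one has
`c ∫_Ω |V*(τ)-V*(σ)|² dx ≤ J*(τ) - J*(σ) ≤ C ∫_Ω |V*(τ)-V*(σ)|² dx`. -/
theorem stmt18 (q : ℝ) (hq1 : 1 < q) (hq2 : q < 2) :
    ∃ c C : ℝ, 0 < c ∧ c ≤ C ∧
      ∀ (d : ℕ) (Ω : Set (EuclideanSpace ℝ (Fin d))), MeasurableSet Ω → volume Ω < ⊤ →
        ∀ (σ τ : EuclideanSpace ℝ (Fin d) → EuclideanSpace ℝ (Fin d)),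
          Measurable σ → Measurable τ →
          IntegrableOn (fun x => ‖σ x‖ ^ q) Ω volume →
          IntegrableOn (fun x => ‖τ x‖ ^ q) Ω volume →
          IntegrableOn (fun x => (‖σ x‖ ^ (q-2)) * ⟪σ x, τ x - σ x⟫) Ω volume →
          (∫ x in Ω, (‖σ x‖ ^ (q-2)) * ⟪σ x, τ x - σ x⟫) = 0 →
          c * (∫ x in Ω, ‖VstarU q (τ x) - VstarU q (σ x)‖ ^ 2)
              ≤ Jstar q Ω τ - Jstar q Ω σ ∧
            Jstar q Ω τ - Jstar q Ω σ
              ≤ C * ∫ x in Ω, ‖VstarU q (τ x) - VstarU q (σ x)‖ ^ 2 := by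
  have hq0 : (0:ℝ) < q := by linarith
  have hc0 : (0:ℝ) < (q-1)/(2*q) := div_pos (by linarith) (by linarith)
  refine ⟨(q-1)/(2*q), 2, hc0, ?_, ?_⟩
  · rw [div_le_iff₀ (by linarith)]; linarith
  intro d Ω hΩ hvol σ τ hσm hτm hσq hτq hmix hEL
  -- measurability of the V-distance integrand
  have hVmeas : Measurable fun P : EuclideanSpace ℝ (Fin d) => ‖P‖ ^ ((q-2)/2) := by
    have heq : (fun P : EuclideanSpace ℝ (Fin d) => ‖P‖ ^ ((q-2)/2))
        = fun P => if ‖P‖ = 0 then 0 else Real.exp (Real.log ‖P‖ * ((q-2)/2)) := by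
      funext P
      rcases eq_or_lt_of_le (norm_nonneg P) with h | h
      · rw [← h, if_pos rfl, Real.zero_rpow (by intro hc; apply absurd hq2; simp
          [show q = 2 by linarith [hc, (by linarith : q ≠ 2)]])]
      · rw [if_neg (ne_of_gt h), Real.rpow_def_of_pos h]
    rw [heq]
    exact Measurable.ite (measurable_norm (measurableSet_singleton 0)) measurable_const
      (Real.measurable_exp.comp ((Real.measurable_log.comp measurable_norm).mul_const _))
  have hV : Measurable (VstarU q (d := d)) := by
    unfold VstarU
    exact hVmeas.smul measurable_id
  have hgm : Measurable fun x => ‖VstarU q (τ x) - VstarU q (σ x)‖ ^ 2 :=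
    (((hV.comp hτm).sub (hV.comp hσm)).norm).pow_const 2
  -- the energy-difference integrand
  have hf : IntegrableOn (fun x => (1/q)*‖τ x‖^q - (1/q)*‖σ x‖^q
      - ‖σ x‖^(q-2) * ⟪σ x, τ x - σ x⟫) Ω volume :=
    ((hτq.const_mul (1/q)).sub (hσq.const_mul (1/q))).sub hmix
  have hpt := fun x => pointwise q hq1 hq2 (σ x) (τ x)
  -- integrability of the V-distance integrand
  have hgint : IntegrableOn (fun x => ‖VstarU q (τ x) - VstarU q (σ x)‖ ^ 2) Ω volume := by
    refine Integrable.mono' (hf.const_mul (2*q/(q-1))) hgm.aestronglyMeasurable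
      (ae_of_all _ fun x => ?_)
    rw [Real.norm_eq_abs, abs_of_nonneg (by positivity)]
    have h1 := (hpt x).1
    rw [show 2*q/(q-1) = ((q-1)/(2*q))⁻¹ by field_simp]
    rw [le_inv_mul_iff₀ hc0]
    exact h1
  -- the integral identity
  have hint : (∫ x in Ω, ((1/q)*‖τ x‖^q - (1/q)*‖σ x‖^q
      - ‖σ x‖^(q-2) * ⟪σ x, τ x - σ x⟫)) = Jstar q Ω τ - Jstar q Ω σ := by
    have h12 : IntegrableOn (fun x => (1/q)*‖τ x‖^q - (1/q)*‖σ x‖^q) Ω volume :=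
      (hτq.const_mul (1/q)).sub (hσq.const_mul (1/q))
    rw [integral_sub h12 hmix,
      integral_sub (hτq.const_mul (1/q)) (hσq.const_mul (1/q)),
      integral_const_mul, integral_const_mul, hEL, sub_zero]
    simp [Jstar]
  constructor
  · have hmono := integral_mono (μ := volume.restrict Ω)
      (hgint.const_mul ((q-1)/(2*q))) hf (fun x => (hpt x).1)
    rw [integral_const_mul] at hmono
    calc (q-1)/(2*q) * (∫ x in Ω, ‖VstarU q (τ x) - VstarU q (σ x)‖ ^ 2) ≤ _ := hmono
      _ = Jstar q Ω τ - Jstar q Ω σ := hint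
  · have hmono := integral_mono (μ := volume.restrict Ω) hf
      (hgint.const_mul 2) (fun x => (hpt x).2)
    rw [integral_const_mul] at hmono
    calc Jstar q Ω τ - Jstar q Ω σ = _ := hint.symm
      _ ≤ 2 * ∫ x in Ω, ‖VstarU q (τ x) - VstarU q (σ x)‖ ^ 2 := hmono
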